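/- arXiv:2605.11319 — 3 statements merged into one kernel-verified Lean document; each statement's English description precedes it below -/
import Mathlib

section
/- For every t > 0 and every x ∈ ℝ, the periodic heat kernel satisfies G(t,x) > 0. -/
open Real

/-- The periodic heat kernel on `[-π, π]`:
`G(t,x) = 1/(2π) + (1/π) ∑_{k=1}^∞ e^{-k² t} cos(k x)`. -/
noncomputable def G (t x : ℝ) : ℝ :=
  1 / (2 * π) + (1 / π) * ∑' k : ℕ, Real.exp (-((k : ℝ) + 1) ^ 2 * t) * Real.cos (((k : ℝ) + 1) * x)

open Complex in
set_option maxHeartbeats 1000000 in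
private lemma heat_aux (t : ℝ) (ht : 0 < t) (x : ℝ) :
    ∃ S : ℝ, 0 < S ∧
      Summable (fun n : ℤ => Real.exp (-(n : ℝ) ^ 2 * t) * Real.cos ((n : ℝ) * x)) ∧
      (∑' n : ℤ, Real.exp (-(n : ℝ) ^ 2 * t) * Real.cos ((n : ℝ) * x)) = S := by
  have hπ : (0:ℝ) < π := Real.pi_pos
  have hπ' : (π:ℂ) ≠ 0 := by exact_mod_cast hπ.ne'
  have ht' : (t:ℂ) ≠ 0 := by exact_mod_cast ht.ne'
  have ha : 0 < (((t / π : ℝ) : ℂ)).re := by simp [div_pos ht hπ]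
  set c : ℝ := x / (2 * π) with hc
  -- the ℤ-indexed complex series
  have hF' : ∀ n : ℤ, cexp (-π * ((t / π : ℝ) : ℂ) * n ^ 2 + 2 * π * (((c : ℝ) : ℂ) * I) * n)
      = cexp ((-(n:ℝ)^2 * t : ℝ) + ((n:ℝ) * x : ℝ) * I) := by
    intro n
    rw [hc]
    congr 1
    push_cast
    field_simp
  have hFsum : Summable (fun n : ℤ =>
      cexp (-π * ((t / π : ℝ) : ℂ) * n ^ 2 + 2 * π * (((c : ℝ) : ℂ) * I) * n)) := by
    have heq : (fun n : ℤ =>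
        cexp (-π * ((t / π : ℝ) : ℂ) * n ^ 2 + 2 * π * (((c : ℝ) : ℂ) * I) * n))
        = fun n : ℤ => jacobiTheta₂_term n ((c : ℝ) : ℂ) (((t / π : ℝ) : ℂ) * I) := by
      funext n
      rw [jacobiTheta₂_term]
      congr 1
      push_cast
      ring_nf
      rw [I_sq]
      ring
    rw [heq]
    exact (summable_jacobiTheta₂_term_iff _ _).mpr (by simp [div_pos ht hπ])
  -- the real parts
  have hre : ∀ n : ℤ,
      (cexp (-π * ((t / π : ℝ) : ℂ) * n ^ 2 + 2 * π * (((c : ℝ) : ℂ) * I) * n)).re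
        = Real.exp (-(n : ℝ) ^ 2 * t) * Real.cos ((n : ℝ) * x) := by
    intro n
    rw [hF', Complex.exp_re]
    simp only [Complex.add_re, Complex.ofReal_re, Complex.mul_I_re, Complex.ofReal_im,
      Complex.add_im, Complex.mul_I_im]
    norm_num
  -- Poisson summation
  have key := Complex.tsum_exp_neg_quadratic ha (((c : ℝ) : ℂ) * I)
  -- the RHS is a positive real
  have hIb : I * (((c : ℝ) : ℂ) * I) = ((-c : ℝ) : ℂ) := by
    push_cast
    rw [mul_comm I, mul_assoc, I_mul_I]
    ring
  have hterm : ∀ n : ℤ, cexp (-π / ((t / π : ℝ) : ℂ) * (n + I * (((c : ℝ) : ℂ) * I)) ^ 2)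
      = ((Real.exp (-(π^2/t) * ((n:ℝ) - c)^2) : ℝ) : ℂ) := by
    intro n
    rw [hIb, Complex.ofReal_exp]
    congr 1
    push_cast
    field_simp
    ring_nf
  have hgsum : Summable (fun n : ℤ => Real.exp (-(π^2/t) * ((n:ℝ) - c)^2)) := by
    rw [← Complex.summable_ofReal]
    have heq2 : (fun n : ℤ => ((Real.exp (-(π^2/t) * ((n:ℝ) - c)^2) : ℝ) : ℂ))
        = fun n : ℤ => cexp ((-(π^2/t * c^2) : ℝ)) *
            jacobiTheta₂_term n (((-(π * c / t) : ℝ) : ℂ) * I) (((π / t : ℝ) : ℂ) * I) := by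
      funext n
      rw [jacobiTheta₂_term, ← Complex.exp_add, Complex.ofReal_exp]
      congr 1
      push_cast
      field_simp
      ring_nf
      rw [I_sq]
      ring
    rw [heq2]
    exact ((summable_jacobiTheta₂_term_iff _ _).mpr (by simp [div_pos hπ ht])).mul_left _
  have hgpos : 0 < ∑' n : ℤ, Real.exp (-(π^2/t) * ((n:ℝ) - c)^2) :=
    Summable.tsum_pos hgsum (fun n => (Real.exp_pos _).le) 0 (Real.exp_pos _)
  -- a^(1/2) is a positive real
  have hapow : (((t / π : ℝ) : ℂ)) ^ (1/2 : ℂ) = (((t/π) ^ (1/2 : ℝ) : ℝ) : ℂ) := by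
    rw [show (1/2 : ℂ) = ((1/2 : ℝ) : ℂ) by norm_num]
    exact (Complex.ofReal_cpow (div_pos ht hπ).le _).symm
  have hS : (∑' n : ℤ, cexp (-π * ((t / π : ℝ) : ℂ) * n ^ 2 + 2 * π * (((c : ℝ) : ℂ) * I) * n))
      = (((1 / (t/π) ^ (1/2:ℝ) * ∑' n : ℤ, Real.exp (-(π^2/t) * ((n:ℝ) - c)^2) : ℝ)) : ℂ) := by
    rw [key, hapow]
    simp_rw [hterm]
    push_cast [Complex.ofReal_tsum]
    ring
  refine ⟨1 / (t/π) ^ (1/2:ℝ) * ∑' n : ℤ, Real.exp (-(π^2/t) * ((n:ℝ) - c)^2),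
    mul_pos (by positivity) hgpos, ?_, ?_⟩
  · simpa only [hre] using (Complex.hasSum_re hFsum.hasSum).summable
  · have h1 := Complex.re_tsum hFsum
    rw [hS] at h1
    simp only [Complex.ofReal_re] at h1
    rw [← tsum_congr hre, ← h1]

/-- For every `t > 0` and every `x ∈ ℝ`, the periodic heat kernel satisfies `G(t,x) > 0`. -/
theorem heatKernel_pos (t : ℝ) (ht : 0 < t) (x : ℝ) : 0 < G t x := by
  have hπ : (0:ℝ) < π := Real.pi_pos
  obtain ⟨S, hSpos, hsum, hS⟩ := heat_aux t ht x
  set f : ℤ → ℝ := fun n => Real.exp (-(n : ℝ) ^ 2 * t) * Real.cos ((n : ℝ) * x) with hf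
  have h1 : Summable fun n : ℕ => f ((n : ℤ) + 1) :=
    hsum.comp_injective (i := fun n : ℕ => (n : ℤ) + 1) (fun a b h => by simp only [] at h; omega)
  have h2 : Summable fun n : ℕ => f (-((n : ℤ) + 1)) :=
    hsum.comp_injective (i := fun n : ℕ => -((n : ℤ) + 1)) (fun a b h => by simp only [] at h; omega)
  have hsplit : ∑' n : ℤ, f n = (∑' n : ℕ, f ((n:ℤ) + 1)) + f 0 + ∑' n : ℕ, f (-((n:ℤ) + 1)) :=
    tsum_of_add_one_of_neg_add_one h1 h2
  have hf0 : f 0 = 1 := by simp [hf]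
  have hneg : ∀ n : ℕ, f (-((n:ℤ) + 1)) = f ((n:ℤ) + 1) := by
    intro n
    simp only [hf]
    push_cast
    rw [neg_sq, ← Real.cos_neg]
    ring_nf
  have hPeq : (∑' n : ℕ, f ((n:ℤ) + 1))
      = ∑' k : ℕ, Real.exp (-((k : ℝ) + 1) ^ 2 * t) * Real.cos (((k : ℝ) + 1) * x) := by
    refine tsum_congr fun n => ?_
    simp only [hf]
    push_cast
    ring_nf
  rw [hS, hf0] at hsplit
  simp_rw [hneg] at hsplit
  have hP : ∑' k : ℕ, Real.exp (-((k : ℝ) + 1) ^ 2 * t) * Real.cos (((k : ℝ) + 1) * x)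
      = (S - 1) / 2 := by
    rw [← hPeq]; linarith [hsplit]
  rw [G, hP]
  have : 1 / (2 * π) + 1 / π * ((S - 1) / 2) = S / (2 * π) := by field_simp; ring
  rw [this]
  positivity
end

section
/- Let β > 1 and γ ∈ (0, β/2]. For every δ ∈ (0, (2π)^{1−β}(β−1)) there exists a constant C > 0 such that for every nonnegative function u ∈ L^β([−π,π]) whose integral I := ∫_{−π}^{π} u(x) dx satisfies I ≥ C, one has ∫_{−π}^{π} [ (β−1) u(x)^β / I^{β} − ((β−1)β/2) u(x)^{2γ} / I^{β+1} ] dx ≥ δ. -/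
open Real MeasureTheory

/-!
Write `I = ∫ u`, `A = ∫ u^β` and `B = ∫ u^e` on a finite measure space of mass `m`. Jensen's
inequality gives `m^{1-β} I^β ≤ A`, and the pointwise bound `u^e ≤ 1 + u^β` gives `B ≤ m + A`.
Hence the drift `(β-1) A / I^β - b B / I^{β+1}` is at least
`(A / I^β)(β - 1 - b/I) - m b / I^{β+1} ≥ m^{1-β}(β-1) - (m^{1-β} + m) b / I`,
which exceeds any `δ < m^{1-β}(β-1)` once `I` is large.
-/

lemma rpow_le_one_add_rpow {a e β : ℝ} (ha : 0 ≤ a) (he : 0 < e) (heβ : e ≤ β) :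
    a ^ e ≤ 1 + a ^ β := by
  rcases le_or_gt a 1 with h | h
  · linarith [rpow_le_one ha h he.le, rpow_nonneg ha β]
  · linarith [rpow_le_rpow_of_exponent_le h.le heβ]

lemma le_drift_of_bounds {β b m k δ I A B : ℝ} (hβ : 0 ≤ β) (hb : 0 ≤ b) (hm : 0 ≤ m)
    (hI : 1 ≤ I) (hbI : b ≤ (β - 1) * I) (hδI : (k + m) * b ≤ (k * (β - 1) - δ) * I)
    (hA : k * I ^ β ≤ A) (hB : B ≤ m + A) :
    δ ≤ (β - 1) * A / I ^ β - b * B / I ^ (β + 1) := by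
  have hI0 : 0 < I := by linarith
  rw [rpow_add hI0, rpow_one]
  set P := I ^ β
  have hP : 1 ≤ P := one_le_rpow hI hβ
  have hk : k ≤ A / P := (le_div_iff₀ (by linarith)).2 (by linarith)
  have hgap : 0 ≤ β - 1 - b / I := by rw [sub_nonneg, div_le_iff₀ hI0]; linarith
  calc δ ≤ k * (β - 1 - b / I) - m * b / I := by
        rw [mul_sub, mul_div_assoc', sub_sub, ← add_div, ← add_mul, le_sub_iff_add_le,
          ← le_sub_iff_add_le', div_le_iff₀ hI0]
        exact hδI
    _ ≤ A / P * (β - 1 - b / I) - m * b / (P * I) := by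
        gcongr
        exact le_mul_of_one_le_left hI0.le hP
    _ = (β - 1) * A / P - b * (m + A) / (P * I) := by field_simp; ring
    _ ≤ (β - 1) * A / P - b * B / (P * I) := by gcongr

section FiniteMeasure

variable {α : Type*} [MeasurableSpace α] {μ : Measure α} [IsFiniteMeasure μ] {u : α → ℝ}

lemma integrable_rpow_of_le {e β : ℝ} (hu : AEMeasurable u μ) (hu0 : ∀ x, 0 ≤ u x)
    (hint : Integrable (fun x => u x ^ β) μ) (he : 0 < e) (heβ : e ≤ β) :
    Integrable (fun x => u x ^ e) μ := by
  refine ((integrable_const 1).add hint).mono' (hu.pow_const e).aestronglyMeasurable ?_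
  refine Filter.Eventually.of_forall fun x => ?_
  rw [norm_of_nonneg (rpow_nonneg (hu0 x) e)]
  exact rpow_le_one_add_rpow (hu0 x) he heβ

lemma integral_rpow_le_measureReal_add {e β : ℝ} (hu : AEMeasurable u μ) (hu0 : ∀ x, 0 ≤ u x)
    (hint : Integrable (fun x => u x ^ β) μ) (he : 0 < e) (heβ : e ≤ β) :
    ∫ x, u x ^ e ∂μ ≤ μ.real Set.univ + ∫ x, u x ^ β ∂μ := by
  calc ∫ x, u x ^ e ∂μ ≤ ∫ x, (1 + u x ^ β) ∂μ :=
        integral_mono (integrable_rpow_of_le hu hu0 hint he heβ) ((integrable_const 1).add hint)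
          fun x => rpow_le_one_add_rpow (hu0 x) he heβ
    _ = μ.real Set.univ + ∫ x, u x ^ β ∂μ := by
        rw [integral_add (integrable_const 1) hint, integral_const, smul_eq_mul, mul_one]

lemma measureReal_rpow_mul_integral_rpow_le [NeZero μ] {β : ℝ} (hβ : 1 ≤ β)
    (hu : AEMeasurable u μ) (hu0 : ∀ x, 0 ≤ u x) (hint : Integrable (fun x => u x ^ β) μ) :
    μ.real Set.univ ^ (1 - β) * (∫ x, u x ∂μ) ^ β ≤ ∫ x, u x ^ β ∂μ := by
  have hm := measureReal_univ_pos (μ := μ)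
  have hu_int : Integrable u μ := by
    simpa using integrable_rpow_of_le hu hu0 hint one_pos hβ
  have jensen := (convexOn_rpow hβ).map_average_le
    (continuous_id.rpow_const fun _ => Or.inr (zero_le_one.trans hβ)).continuousOn isClosed_Ici
    (Filter.Eventually.of_forall hu0) hu_int hint
  simp only [average_eq, smul_eq_mul] at jensen
  rw [mul_rpow (inv_nonneg.2 hm.le) (integral_nonneg hu0), inv_rpow hm.le] at jensen
  calc μ.real Set.univ ^ (1 - β) * (∫ x, u x ∂μ) ^ β
      = μ.real Set.univ * ((μ.real Set.univ ^ β)⁻¹ * (∫ x, u x ∂μ) ^ β) := by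
        rw [rpow_sub hm, rpow_one]; ring
    _ ≤ μ.real Set.univ * ((μ.real Set.univ)⁻¹ * ∫ x, u x ^ β ∂μ) := by gcongr
    _ = ∫ x, u x ^ β ∂μ := by field_simp

theorem exists_forall_le_integral_drift [NeZero μ] {β e b δ : ℝ} (hβ : 1 < β) (he : 0 < e)
    (heβ : e ≤ β) (hb : 0 ≤ b) (hδ : δ < μ.real Set.univ ^ (1 - β) * (β - 1)) :
    ∃ C : ℝ, 0 < C ∧ ∀ u : α → ℝ, AEMeasurable u μ → (∀ x, 0 ≤ u x) →
      Integrable (fun x => u x ^ β) μ → C ≤ ∫ x, u x ∂μ →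
      δ ≤ ∫ x, ((β - 1) * u x ^ β / (∫ z, u z ∂μ) ^ β -
        b * u x ^ e / (∫ z, u z ∂μ) ^ (β + 1)) ∂μ := by
  set k := μ.real Set.univ ^ (1 - β)
  have hgap : 0 < k * (β - 1) - δ := by linarith
  refine ⟨max 1 (max (b / (β - 1)) ((k + μ.real Set.univ) * b / (k * (β - 1) - δ))),
    lt_max_of_lt_left one_pos, fun u hu hu0 hint hC => ?_⟩
  obtain ⟨hI, hbI, hδI⟩ := by simpa only [max_le_iff] using hC
  rw [div_le_iff₀ (by linarith), mul_comm] at hbI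
  rw [div_le_iff₀ hgap, mul_comm _ (k * (β - 1) - δ)] at hδI
  have hint_e := integrable_rpow_of_le hu hu0 hint he heβ
  rw [integral_sub ((hint.const_mul _).div_const _) ((hint_e.const_mul _).div_const _),
    integral_div, integral_div, integral_const_mul, integral_const_mul]
  exact le_drift_of_bounds (by linarith) hb measureReal_nonneg hI hbI hδI
    (measureReal_rpow_mul_integral_rpow_le hβ.le hu hu0 hint)
    (integral_rpow_le_measureReal_add hu hu0 hint he heβ)

end FiniteMeasure

/-- The key drift estimate of Section 4: for `β > 1`, `γ ∈ (0, β/2]` and any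
`δ ∈ (0, (2π)^{1-β}(β-1))`, there exists `C > 0` such that every nonnegative
`u ∈ L^β([-π,π])` with `I := ∫_{-π}^{π} u ≥ C` satisfies
`∫_{-π}^{π} [(β-1) u^β / I^β - ((β-1)β/2) u^{2γ} / I^{β+1}] ≥ δ`. -/
theorem drift_estimate_holder_case (β γ δ : ℝ) (hβ : 1 < β)
    (hγ : γ ∈ Set.Ioc (0 : ℝ) (β / 2))
    (hδ : δ ∈ Set.Ioo (0 : ℝ) ((2 * π) ^ (1 - β) * (β - 1))) :
    ∃ C : ℝ, 0 < C ∧ ∀ u : ℝ → ℝ,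
      Measurable u →
      (∀ x, 0 ≤ u x) →
      IntegrableOn (fun x => u x ^ β) (Set.Icc (-π) π) →
      C ≤ ∫ x in Set.Icc (-π) π, u x →
      δ ≤ ∫ x in Set.Icc (-π) π,
        ((β - 1) * u x ^ β / (∫ z in Set.Icc (-π) π, u z) ^ β -
          ((β - 1) * β / 2) * u x ^ (2 * γ) / (∫ z in Set.Icc (-π) π, u z) ^ (β + 1)) := by
  have hmass : (volume.restrict (Set.Icc (-π) π)).real Set.univ = 2 * π := by
    rw [measureReal_restrict_apply_univ, volume_real_Icc_of_le (by linarith [pi_pos])]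
    ring
  have : NeZero (volume.restrict (Set.Icc (-π) π)) :=
    ⟨fun h => by simp [h, pi_ne_zero] at hmass⟩
  obtain ⟨C, hC, hdrift⟩ := exists_forall_le_integral_drift
    (μ := volume.restrict (Set.Icc (-π) π)) (e := 2 * γ) (b := (β - 1) * β / 2) hβ
    (by linarith [hγ.1]) (by linarith [hγ.2]) (by have := hβ.le; positivity) (hmass ▸ hδ.2)
  exact ⟨C, hC, fun u hu => hdrift u hu.aemeasurable⟩
end

section
/- Let β > 1, γ ≥ β/2 and M > 0. For every measurable function u : [−π,π] → ℝ with 0 ≤ u(x) ≤ M for almost every x, whose integral I := ∫_{−π}^{π} u(x) dx satisfies I > 0 and 2I ≥ β M^{2γ−β}, one has ∫_{−π}^{π} [ (β−1) u(x)^β / I^{β} − ((β−1)β/2) u(x)^{2γ} / I^{β+1} ] dx ≥ (2π)^{1−β} (β−1) (1 − β M^{2γ−β} / (2I)). -/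
open Real MeasureTheory

/-!
Since `0 ≤ u ≤ M` and `2γ ≥ β`, `u^{2γ} ≤ u^β M^{2γ-β}`, so the integrand is bounded below by the
multiple `(β-1)(1 - β M^{2γ-β}/(2I)) / I^β` of `u^β`, whose coefficient is nonnegative exactly
because `2I ≥ β M^{2γ-β}`. Jensen's inequality for `t ↦ t^β` then gives `∫ u^β ≥ |D|^{1-β} I^β`.
-/

lemma rpow_le_rpow_mul_rpow_sub {t M p q : ℝ} (ht : 0 ≤ t) (htM : t ≤ M) (hp : 0 < p)
    (hpq : p ≤ q) : t ^ q ≤ t ^ p * M ^ (q - p) :=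
  calc t ^ q = t ^ p * t ^ (q - p) := by rw [← rpow_add' ht (by linarith), add_sub_cancel]
    _ ≤ t ^ p * M ^ (q - p) := by gcongr

section

variable {α : Type*} [MeasurableSpace α] {μ : Measure α}

lemma integrable_rpow_of_ae_bounded [IsFiniteMeasure μ] {f : α → ℝ} {M p : ℝ} (hp : 0 ≤ p)
    (hf : AEStronglyMeasurable f μ) (hfM : ∀ᵐ x ∂μ, 0 ≤ f x ∧ f x ≤ M) :
    Integrable (fun x => f x ^ p) μ := by
  refine .of_bound ((continuous_rpow_const hp).comp_aestronglyMeasurable hf) (M ^ p) ?_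
  filter_upwards [hfM] with x ⟨hx0, hxM⟩
  rw [norm_of_nonneg (rpow_nonneg hx0 p)]
  exact rpow_le_rpow hx0 hxM hp

/-- Jensen's inequality for `t ↦ t ^ p`, with the averages cleared. -/
lemma measureReal_univ_rpow_mul_rpow_integral_le [IsFiniteMeasure μ] [NeZero μ] {p : ℝ}
    (hp : 1 ≤ p) {f : α → ℝ} (hf0 : 0 ≤ᵐ[μ] f) (hf : Integrable f μ)
    (hfp : Integrable (fun x => f x ^ p) μ) :
    μ.real Set.univ ^ (1 - p) * (∫ x, f x ∂μ) ^ p ≤ ∫ x, f x ^ p ∂μ := by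
  set m := μ.real Set.univ
  have hm : 0 < m := measureReal_univ_pos
  have hI : 0 ≤ ∫ x, f x ∂μ := integral_nonneg_of_ae hf0
  have jensen := (convexOn_rpow hp).map_average_le
    (continuous_rpow_const (by linarith)).continuousOn isClosed_Ici hf0 hf hfp
  rw [average_eq, average_eq, smul_eq_mul, smul_eq_mul,
    mul_rpow (inv_nonneg.2 hm.le) hI, inv_rpow hm.le] at jensen
  calc m ^ (1 - p) * (∫ x, f x ∂μ) ^ p = m * ((m ^ p)⁻¹ * (∫ x, f x ∂μ) ^ p) := by
        rw [rpow_sub hm, rpow_one]; ring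
    _ ≤ m * (m⁻¹ * ∫ x, f x ^ p ∂μ) := by gcongr
    _ = ∫ x, f x ^ p ∂μ := by field_simp

end

lemma drift_integrand_lower_bound {β γ M I t : ℝ} (hβ : 1 < β) (hγ : β / 2 ≤ γ) (hI : 0 < I)
    (ht : 0 ≤ t) (htM : t ≤ M) :
    (β - 1) * (1 - β * M ^ (2 * γ - β) / (2 * I)) / I ^ β * t ^ β ≤
      (β - 1) * t ^ β / I ^ β - ((β - 1) * β / 2) * t ^ (2 * γ) / I ^ (β + 1) := by
  have hsplit := rpow_le_rpow_mul_rpow_sub ht htM (by linarith) (by linarith : β ≤ 2 * γ)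
  have hgap : (β - 1) * t ^ β / I ^ β - ((β - 1) * β / 2) * t ^ (2 * γ) / I ^ (β + 1) -
      (β - 1) * (1 - β * M ^ (2 * γ - β) / (2 * I)) / I ^ β * t ^ β =
      (β - 1) * β / (2 * I ^ β * I) * (t ^ β * M ^ (2 * γ - β) - t ^ (2 * γ)) := by
    rw [rpow_add hI, rpow_one]
    field_simp
    ring
  have : 0 ≤ (β - 1) * β / (2 * I ^ β * I) * (t ^ β * M ^ (2 * γ - β) - t ^ (2 * γ)) :=
    mul_nonneg (div_nonneg (by nlinarith) (by positivity)) (by linarith)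
  linarith

theorem le_integral_drift {α : Type*} [MeasurableSpace α] {μ : Measure α} [IsFiniteMeasure μ]
    {β γ M : ℝ} (hβ : 1 < β) (hγ : β / 2 ≤ γ) {u : α → ℝ}
    (hbound : ∀ᵐ x ∂μ, 0 ≤ u x ∧ u x ≤ M) (hIpos : 0 < ∫ x, u x ∂μ)
    (hI : β * M ^ (2 * γ - β) ≤ 2 * ∫ x, u x ∂μ) :
    μ.real Set.univ ^ (1 - β) * (β - 1) * (1 - β * M ^ (2 * γ - β) / (2 * ∫ x, u x ∂μ)) ≤
      ∫ x, ((β - 1) * u x ^ β / (∫ z, u z ∂μ) ^ β -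
          ((β - 1) * β / 2) * u x ^ (2 * γ) / (∫ z, u z ∂μ) ^ (β + 1)) ∂μ := by
  set I := ∫ x, u x ∂μ
  set c := (β - 1) * (1 - β * M ^ (2 * γ - β) / (2 * I)) / I ^ β
  have hc : 0 ≤ c := by
    have hratio : β * M ^ (2 * γ - β) / (2 * I) ≤ 1 := div_le_one_of_le₀ hI (by linarith)
    exact div_nonneg (mul_nonneg (by linarith) (by linarith)) (rpow_nonneg hIpos.le β)
  -- the Bochner integral of a non-integrable function is `0`
  have hu : Integrable u μ := .of_integral_ne_zero hIpos.ne'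
  have : NeZero μ := ⟨fun h => by simp [I, h] at hIpos⟩
  have hint {p : ℝ} (hp : 0 ≤ p) : Integrable (fun x => u x ^ p) μ :=
    integrable_rpow_of_ae_bounded hp hu.aestronglyMeasurable hbound
  have hjensen := measureReal_univ_rpow_mul_rpow_integral_le hβ.le
    (hbound.mono fun _ hx => hx.1) hu (hint (by linarith))
  calc μ.real Set.univ ^ (1 - β) * (β - 1) * (1 - β * M ^ (2 * γ - β) / (2 * I))
      = c * (μ.real Set.univ ^ (1 - β) * I ^ β) := by
        simp only [c]
        field_simp
    _ ≤ c * ∫ x, u x ^ β ∂μ := by gcongr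
    _ = ∫ x, c * u x ^ β ∂μ := (integral_const_mul c _).symm
    _ ≤ _ := by
      refine integral_mono_ae ((hint (by linarith)).const_mul c)
        ((((hint (by linarith)).const_mul _).div_const _).sub
          (((hint (by linarith)).const_mul _).div_const _)) ?_
      filter_upwards [hbound] with x ⟨hx0, hxM⟩
      exact drift_integrand_lower_bound hβ hγ hIpos hx0 hxM

theorem drift_estimate_superlinear_case_general (β γ M : ℝ) (hβ : 1 < β) (hγ : β / 2 ≤ γ)
    (u : ℝ → ℝ)
    (hbound : ∀ᵐ x ∂(volume.restrict (Set.Icc (-π) π)), 0 ≤ u x ∧ u x ≤ M)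
    (hIpos : 0 < ∫ x in Set.Icc (-π) π, u x)
    (hI : β * M ^ (2 * γ - β) ≤ 2 * ∫ x in Set.Icc (-π) π, u x) :
    (2 * π) ^ (1 - β) * (β - 1) *
        (1 - β * M ^ (2 * γ - β) / (2 * ∫ x in Set.Icc (-π) π, u x)) ≤
      ∫ x in Set.Icc (-π) π,
        ((β - 1) * u x ^ β / (∫ z in Set.Icc (-π) π, u z) ^ β -
          ((β - 1) * β / 2) * u x ^ (2 * γ) / (∫ z in Set.Icc (-π) π, u z) ^ (β + 1)) := by
  have hlength : (volume.restrict (Set.Icc (-π) π)).real Set.univ = 2 * π := by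
    rw [measureReal_restrict_apply_univ, volume_real_Icc_of_le (by linarith [pi_pos])]
    ring
  simpa only [hlength] using le_integral_drift hβ hγ hbound hIpos hI

/-- The drift estimate (5.22)-(5.25) in the proof of Lemma 5.5: for `β > 1`, `γ ≥ β/2`,
`M > 0` and every measurable `u : [-π,π] → ℝ` with `0 ≤ u ≤ M` a.e. whose integral
`I := ∫_{-π}^{π} u` satisfies `I > 0` and `2I ≥ β M^{2γ-β}`, one has
`∫_{-π}^{π} [(β-1) u^β / I^β - ((β-1)β/2) u^{2γ} / I^{β+1}]
  ≥ (2π)^{1-β} (β-1) (1 - β M^{2γ-β} / (2I))`. -/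
theorem drift_estimate_superlinear_case (β γ M : ℝ) (hβ : 1 < β) (hγ : β / 2 ≤ γ)
    (hM : 0 < M) (u : ℝ → ℝ) (hu : Measurable u)
    (hbound : ∀ᵐ x ∂(volume.restrict (Set.Icc (-π) π)), 0 ≤ u x ∧ u x ≤ M)
    (hIpos : 0 < ∫ x in Set.Icc (-π) π, u x)
    (hI : β * M ^ (2 * γ - β) ≤ 2 * ∫ x in Set.Icc (-π) π, u x) :
    (2 * π) ^ (1 - β) * (β - 1) *
        (1 - β * M ^ (2 * γ - β) / (2 * ∫ x in Set.Icc (-π) π, u x)) ≤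
      ∫ x in Set.Icc (-π) π,
        ((β - 1) * u x ^ β / (∫ z in Set.Icc (-π) π, u z) ^ β -
          ((β - 1) * β / 2) * u x ^ (2 * γ) / (∫ z in Set.Icc (-π) π, u z) ^ (β + 1)) :=
  drift_estimate_superlinear_case_general β γ M hβ hγ u hbound hIpos hI
end
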